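/- arXiv:2001.04440 — 4 statements merged into one kernel-verified Lean document; each statement's English description precedes it below -/
import Mathlib

section
/- Tracing out n−m qubits from the n-qubit Dicke state |D_k^n⟩ yields the diagonal mixture Tr_{n-m}(|D_k^n⟩⟨D_k^n|) = (n choose k)^{-1} Σ_{α} (m choose α)(n−m choose k−α) |D_α^m⟩⟨D_α^m|, where the sum runs over α with max(0, k−(n−m)) ≤ α ≤ min(m, k); in particular this is a valid density matrix since Σ_α (m choose α)(n−m choose k−α) = (n choose k). -/
open Finset

/-- The `n`-qubit Dicke state with `k` excitations, as a function `{0,1}^n → ℂ`. -/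
noncomputable def dickeVec (n k : ℕ) : (Fin n → Fin 2) → ℂ := fun i =>
  if (Finset.univ.filter fun p => i p = 1).card = k
    then ((Real.sqrt (n.choose k) : ℂ))⁻¹ else 0

/-- The rank-one projector `|D_k^n⟩⟨D_k^n|` as a matrix. -/
noncomputable def dickeProj (n k : ℕ) :
    Matrix (Fin n → Fin 2) (Fin n → Fin 2) ℂ := fun a b =>
  dickeVec n k a * star (dickeVec n k b)

/-!
The amplitude of `|D_k^n⟩` on a basis vector depends only on its Hamming weight, and the
weight of a concatenation `a ++ c` is the sum of the weights. Hence the `(a, b)` entry of the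
partial trace vanishes unless `a` and `b` have a common weight `α`, in which case it counts the
`(r choose k - α)` completions `c` of weight `k - α`, each contributing `(n choose k)⁻¹`.
-/

def weight {n : ℕ} (v : Fin n → Fin 2) : ℕ := #{p | v p = 1}

lemma weight_le {n : ℕ} (v : Fin n → Fin 2) : weight v ≤ n :=
  (card_filter_le _ _).trans_eq (card_fin n)

lemma weight_append {m r : ℕ} (a : Fin m → Fin 2) (c : Fin r → Fin 2) :
    weight (Fin.append a c) = weight a + weight c := by
  simp only [weight, card_filter, Fin.sum_univ_add, Fin.append_left, Fin.append_right]

lemma card_filter_weight_eq (r j : ℕ) : #{c : Fin r → Fin 2 | weight c = j} = r.choose j := by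
  conv_rhs => rw [← card_fin r, ← card_powersetCard]
  refine card_bij' (fun c _ => ({p | c p = 1} : Finset _)) (fun s _ p => if p ∈ s then 1 else 0)
    (fun c hc => ?_) (fun s hs => ?_) (fun c _ => funext fun p => ?_) (fun s _ => by simp)
  · simpa [weight] using (mem_filter.1 hc).2
  · refine mem_filter.2 ⟨mem_univ _, ?_⟩
    simpa [weight] using mem_powersetCard_univ.1 hs
  · obtain h | h : c p = 0 ∨ c p = 1 := by omega
    all_goals simp [h]

lemma card_filter_add_weight_eq (r α k : ℕ) :
    #{c : Fin r → Fin 2 | α + weight c = k} = if α ≤ k then r.choose (k - α) else 0 := by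
  split_ifs with h
  · rw [← card_filter_weight_eq]
    congr 1
    ext c
    simp only [mem_filter, mem_univ, true_and]
    omega
  · rw [card_eq_zero, filter_eq_empty_iff]
    intro c _
    omega

lemma dickeProj_apply (n k : ℕ) (a b : Fin n → Fin 2) :
    dickeProj n k a b = if weight a = k ∧ weight b = k then ((n.choose k : ℂ))⁻¹ else 0 := by
  have hnorm : ((Real.sqrt (n.choose k) : ℂ))⁻¹ * star ((Real.sqrt (n.choose k) : ℂ))⁻¹ =
      ((n.choose k : ℂ))⁻¹ := by
    rw [Complex.star_def, ← Complex.ofReal_inv, Complex.conj_ofReal, ← Complex.ofReal_mul,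
      ← mul_inv, Real.mul_self_sqrt (Nat.cast_nonneg _), Complex.ofReal_inv, Complex.ofReal_natCast]
  simp only [dickeProj, dickeVec]
  split_ifs <;> simp_all [weight]

lemma sum_dickeProj_append (m r k : ℕ) (a b : Fin m → Fin 2) :
    ∑ c : Fin r → Fin 2, dickeProj (m + r) k (Fin.append a c) (Fin.append b c) =
      ((m + r).choose k : ℂ)⁻¹ *
        if weight a = weight b ∧ weight a ≤ k then (r.choose (k - weight a) : ℂ) else 0 := by
  simp_rw [dickeProj_apply, weight_append]
  by_cases hab : weight a = weight b
  · simp_rw [hab, and_self, true_and]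
    rw [← sum_filter, sum_const, nsmul_eq_mul, card_filter_add_weight_eq]
    split_ifs <;> simp [mul_comm]
  · rw [if_neg (by tauto), mul_zero]
    exact sum_eq_zero fun c _ => if_neg fun h => hab (by omega)

lemma sum_choose_mul_dickeProj (m r k : ℕ) (a b : Fin m → Fin 2) :
    ∑ α ∈ Icc (k - r) (min m k),
        ((m.choose α : ℂ) * (r.choose (k - α) : ℂ)) * dickeProj m α a b =
      if weight a = weight b ∧ weight a ≤ k then (r.choose (k - weight a) : ℂ) else 0 := by
  simp_rw [dickeProj_apply]
  by_cases hab : weight a = weight b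
  · have hm := weight_le a
    have hchoose : (m.choose (weight b) : ℂ) ≠ 0 := by
      rw [← hab]; exact_mod_cast (Nat.choose_pos hm).ne'
    simp_rw [hab, and_self, true_and, mul_ite, mul_zero]
    rw [sum_ite_eq, mul_right_comm, mul_inv_cancel₀ hchoose, one_mul]
    split_ifs with hIcc hk hk
    · rfl
    · exact absurd (mem_Icc.1 hIcc).2 (by omega)
    · rw [mem_Icc] at hIcc
      rw [Nat.choose_eq_zero_of_lt (by omega), Nat.cast_zero]
    · rfl
  · rw [if_neg (by tauto)]
    exact sum_eq_zero fun α _ => by rw [if_neg fun h => hab (h.1.trans h.2.symm), mul_zero]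

lemma sum_Icc_choose_mul_choose (m r k : ℕ) :
    ∑ α ∈ Icc (k - r) (min m k), m.choose α * r.choose (k - α) = (m + r).choose k := by
  rw [Nat.add_choose_eq, Nat.sum_antidiagonal_eq_sum_range_succ_mk]
  refine sum_subset (fun α hα => by simp only [mem_Icc, mem_range] at hα ⊢; omega)
    fun α hα hαIcc => ?_
  simp only [mem_range, mem_Icc, not_and_or, not_le] at hα hαIcc
  rcases hαIcc with hr | hm
  · rw [Nat.choose_eq_zero_of_lt (by omega : r < k - α), mul_zero]
  · rw [Nat.choose_eq_zero_of_lt (by omega : m < α), zero_mul]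

theorem stmt_6_general (m r k : ℕ) :
    ((fun a b => ∑ c : Fin r → Fin 2,
        dickeProj (m + r) k (Fin.append a c) (Fin.append b c))
      = fun (a b : Fin m → Fin 2) =>
          (((m + r).choose k : ℂ))⁻¹ *
            ∑ α ∈ Finset.Icc (k - r) (min m k),
              ((m.choose α : ℂ) * ((r.choose (k - α) : ℂ))) * dickeProj m α a b)
    ∧ ∑ α ∈ Finset.Icc (k - r) (min m k),
        m.choose α * r.choose (k - α) = (m + r).choose k := by
  refine ⟨?_, sum_Icc_choose_mul_choose m r k⟩
  funext a b
  rw [sum_dickeProj_append, sum_choose_mul_dickeProj]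

/-- Tracing out the last `r = n - m` qubits of the `n`-qubit Dicke state (`n = m + r`)
yields the diagonal mixture
`(n choose k)⁻¹ Σ_{max(0,k-r) ≤ α ≤ min(m,k)} (m choose α)(r choose k-α) |D_α^m⟩⟨D_α^m|`,
and the weights sum to `(n choose k)` (Vandermonde), so the result has unit trace. -/
theorem stmt_6 (m r k : ℕ) (hk : k ≤ m + r) :
    ((fun a b => ∑ c : Fin r → Fin 2,
        dickeProj (m + r) k (Fin.append a c) (Fin.append b c))
      = fun (a b : Fin m → Fin 2) =>
          (((m + r).choose k : ℂ))⁻¹ *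
            ∑ α ∈ Finset.Icc (k - r) (min m k),
              ((m.choose α : ℂ) * ((r.choose (k - α) : ℂ))) * dickeProj m α a b)
    ∧ ∑ α ∈ Finset.Icc (k - r) (min m k),
        m.choose α * r.choose (k - α) = (m + r).choose k :=
  stmt_6_general m r k
end

section
/- The partial trace over the last n−m qubits of the rank-one operator |D_λ^n⟩⟨D_μ^n| between two n-qubit Dicke states equals Σ_{κ=0}^{n-m} (n−m choose κ) √[(m choose λ−κ)(m choose μ−κ)/((n choose λ)(n choose μ))] |D_{λ−κ}^m⟩⟨D_{μ−κ}^m|, where terms with λ−κ or μ−κ outside [0,m] are zero. -/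
/-!
Write a basis string of the `m + r` qubits as `a ++ c`. Its weight is `|a| + |c|`, so every term
of the partial trace depends on the traced-out string `c` only through its weight `κ`, which is
shared by `r.choose κ` strings; for `|a| = λ - κ` the amplitude `1/√C(m+r, λ)` of `|D_λ^{m+r}⟩`
equals `√(C(m, λ-κ)/C(m+r, λ))` times the amplitude `1/√C(m, λ-κ)` of `|D_{λ-κ}^m⟩`.
-/

open Finset

theorem Fin.card_filter_append {α : Type*} {m r : ℕ} (P : α → Prop) [DecidablePred P]
    (a : Fin m → α) (c : Fin r → α) :
    #{p | P (Fin.append a c p)} = #{p | P (a p)} + #{p | P (c p)} := by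
  simp only [card_filter, Fin.sum_univ_add, Fin.append_left, Fin.append_right]

theorem sum_fun_fin_two_apply_card {ι M : Type*} [Fintype ι] [DecidableEq ι] [AddCommMonoid M]
    (f : ℕ → M) :
    ∑ c : ι → Fin 2, f #{p | c p = 1}
      = ∑ j ∈ range (Fintype.card ι + 1), (Fintype.card ι).choose j • f j := by
  rw [← card_univ, ← sum_powerset_apply_card]
  refine sum_nbij' (fun c => ({p | c p = 1} : Finset ι)) (fun s p => if p ∈ s then 1 else 0)
    (by simp) (by simp) (fun c _ => ?_) (fun s _ => ?_) (fun _ _ => rfl)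
  · funext p
    simp only [mem_filter, mem_univ, true_and]
    split_ifs <;> omega
  · ext p
    simp

section

variable {m r : ℕ}

theorem dickeVec_append (a : Fin m → Fin 2) (c : Fin r → Fin 2) (k : ℕ) :
    dickeVec (m + r) k (Fin.append a c) =
      if #{p | c p = 1} ≤ k then
        (√((m.choose (k - #{p | c p = 1}) : ℝ) / (m + r).choose k) : ℂ)
          * dickeVec m (k - #{p | c p = 1}) a
      else 0 := by
  unfold dickeVec
  rw [Fin.card_filter_append (· = 1) a c]
  set wa := #{p | a p = 1}
  set wc := #{p | c p = 1}
  by_cases hk : wa + wc = k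
  · have hwa : wa ≤ m := by simpa using card_filter_le univ fun p => a p = 1
    have hA : (√(m.choose wa : ℝ) : ℂ) ≠ 0 :=
      mod_cast (Real.sqrt_pos.mpr (mod_cast Nat.choose_pos hwa)).ne'
    rw [if_pos hk, if_pos (by omega), if_pos (by omega), ← hk, Nat.add_sub_cancel,
      Real.sqrt_div' _ (Nat.cast_nonneg _)]
    push_cast
    field_simp
  · rw [if_neg hk]
    by_cases hc : wc ≤ k
    · rw [if_pos hc, if_neg (by omega), mul_zero]
    · rw [if_neg hc]

noncomputable def dickeReducedTerm (m r lam mu : ℕ) (a b : Fin m → Fin 2) (κ : ℕ) : ℂ :=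
  if κ ≤ lam ∧ κ ≤ mu then
    (√(((m.choose (lam - κ) * m.choose (mu - κ) : ℕ) : ℝ) /
        (((m + r).choose lam * (m + r).choose mu : ℕ) : ℝ)) : ℂ)
      * (dickeVec m (lam - κ) a * star (dickeVec m (mu - κ) b))
  else 0

theorem dickeVec_append_mul_star_dickeVec_append (a b : Fin m → Fin 2) (c : Fin r → Fin 2)
    (lam mu : ℕ) :
    dickeVec (m + r) lam (Fin.append a c) * star (dickeVec (m + r) mu (Fin.append b c)) =
      dickeReducedTerm m r lam mu a b #{p | c p = 1} := by
  rw [dickeVec_append, dickeVec_append, dickeReducedTerm]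
  by_cases h : #{p | c p = 1} ≤ lam ∧ #{p | c p = 1} ≤ mu
  · rw [if_pos h.1, if_pos h.2, if_pos h, Nat.cast_mul, Nat.cast_mul, ← div_mul_div_comm,
      Real.sqrt_mul (by positivity), star_mul', Complex.star_def, Complex.conj_ofReal]
    push_cast
    ring
  · rw [if_neg h]
    split_ifs <;> simp_all

end

theorem stmt_7_general (m r lam mu : ℕ) :
    (fun a b => ∑ c : Fin r → Fin 2,
        dickeVec (m + r) lam (Fin.append a c) * star (dickeVec (m + r) mu (Fin.append b c)))
      = fun (a b : Fin m → Fin 2) =>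
          ∑ κ ∈ Finset.range (r + 1),
            if κ ≤ lam ∧ κ ≤ mu then
              ((r.choose κ : ℂ) *
                ((Real.sqrt ((((m.choose (lam - κ)) * (m.choose (mu - κ)) : ℕ) : ℝ) /
                    ((((m + r).choose lam) * ((m + r).choose mu) : ℕ) : ℝ)) : ℝ) : ℂ))
                * (dickeVec m (lam - κ) a * star (dickeVec m (mu - κ) b))
            else 0 := by
  funext a b
  simp_rw [dickeVec_append_mul_star_dickeVec_append]
  rw [sum_fun_fin_two_apply_card, Fintype.card_fin]
  refine sum_congr rfl fun κ _ => ?_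
  rw [dickeReducedTerm]
  split_ifs
  · rw [nsmul_eq_mul, mul_assoc]
  · exact smul_zero _

/-- The partial trace over the last `r = n - m` qubits of `|D_lam^n⟩⟨D_mu^n|` (`n = m + r`)
equals `Σ_{κ=0}^{r} (r choose κ) √[(m choose lam-κ)(m choose mu-κ)/((n choose lam)(n choose mu))]
|D_{lam-κ}^m⟩⟨D_{mu-κ}^m|`, where terms with `lam-κ` or `mu-κ` outside `[0,m]` vanish. -/
theorem stmt_7 (m r lam mu : ℕ) (hlam : lam ≤ m + r) (hmu : mu ≤ m + r) :
    (fun a b => ∑ c : Fin r → Fin 2,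
        dickeVec (m + r) lam (Fin.append a c) * star (dickeVec (m + r) mu (Fin.append b c)))
      = fun (a b : Fin m → Fin 2) =>
          ∑ κ ∈ Finset.range (r + 1),
            if κ ≤ lam ∧ κ ≤ mu then
              ((r.choose κ : ℂ) *
                ((Real.sqrt ((((m.choose (lam - κ)) * (m.choose (mu - κ)) : ℕ) : ℝ) /
                    ((((m + r).choose lam) * ((m + r).choose mu) : ℕ) : ℝ)) : ℝ) : ℂ))
                * (dickeVec m (lam - κ) a * star (dickeVec m (mu - κ) b))
            else 0 :=
  stmt_7_general m r lam mu
end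

section
/- For n ≥ 2 and ε > 0, set x_0 = 2^{-1/n} ε^{-1/(n(n-1))}, x_1 = e^{iπ/n} x_0, y_0 = 2^{-1/n} ε^{1/n}, y_1 = −e^{iπ/n} y_0. Then for every 0 ≤ k ≤ n: x_0^{n−k} y_0^k + x_1^{n−k} y_1^k equals 0 if k is even, and equals ε^{(k−1)/(n−1)} if k is odd. -/
lemma key_real (n k : ℕ) (hn : 2 ≤ n) (hk : k ≤ n) (ε : ℝ) (hε : 0 < ε) :
    2 * ((2:ℝ) ^ (-(1:ℝ)/n) * ε ^ (-(1:ℝ)/((n:ℝ) * ((n:ℝ) - 1)))) ^ (n - k) *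
      ((2:ℝ) ^ (-(1:ℝ)/n) * ε ^ ((1:ℝ)/n)) ^ k
      = ε ^ (((k:ℝ) - 1)/((n:ℝ) - 1)) := by
  have hn0 : (n:ℝ) ≠ 0 := by positivity
  have hn1 : (n:ℝ) - 1 ≠ 0 := by
    have : (2:ℝ) ≤ n := by exact_mod_cast hn
    nlinarith
  have h2 : (0:ℝ) < 2 := two_pos
  have hnk : ((n - k : ℕ) : ℝ) = (n:ℝ) - k := by
    push_cast [Nat.cast_sub hk]; ring
  rw [← Real.rpow_natCast _ (n - k), ← Real.rpow_natCast _ k,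
    Real.mul_rpow (by positivity) (by positivity),
    Real.mul_rpow (by positivity) (by positivity),
    ← Real.rpow_mul h2.le, ← Real.rpow_mul hε.le,
    ← Real.rpow_mul h2.le, ← Real.rpow_mul hε.le, hnk]
  have e1 : -(1:ℝ)/n * ((n:ℝ) - k) + -(1:ℝ)/n * k = -1 := by field_simp; ring
  have e2 : -(1:ℝ)/((n:ℝ)*((n:ℝ)-1)) * ((n:ℝ) - k) + (1:ℝ)/n * k
      = ((k:ℝ) - 1)/((n:ℝ) - 1) := by field_simp; ring
  calc 2 * ((2:ℝ) ^ (-(1:ℝ)/n * ((n:ℝ) - k)) * ε ^ (-(1:ℝ)/((n:ℝ)*((n:ℝ)-1)) * ((n:ℝ) - k))) *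
        ((2:ℝ) ^ (-(1:ℝ)/n * (k:ℝ)) * ε ^ ((1:ℝ)/n * (k:ℝ)))
      = 2 * (2:ℝ) ^ (-(1:ℝ)/n * ((n:ℝ) - k) + -(1:ℝ)/n * k)
          * ε ^ (-(1:ℝ)/((n:ℝ)*((n:ℝ)-1)) * ((n:ℝ) - k) + (1:ℝ)/n * k) := by
        rw [Real.rpow_add h2, Real.rpow_add hε]; ring
    _ = ε ^ (((k:ℝ) - 1)/((n:ℝ) - 1)) := by
        rw [e1, e2, Real.rpow_neg_one]; ring

/-- The entries of the bond-dimension-2 diagonal TI MPS approximating the W state: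
with `x₀ = 2^{-1/n} ε^{-1/(n(n-1))}`, `x₁ = e^{iπ/n} x₀`, `y₀ = 2^{-1/n} ε^{1/n}`,
`y₁ = -e^{iπ/n} y₀`, the weight-`k` coefficient `x₀^{n-k} y₀^k + x₁^{n-k} y₁^k` equals
`0` if `k` is even and `ε^{(k-1)/(n-1)}` if `k` is odd. -/
theorem stmt_16 (n : ℕ) (hn : 2 ≤ n) (ε : ℝ) (hε : 0 < ε) (k : ℕ) (hk : k ≤ n) :
    letI x₀ : ℂ := (((2 : ℝ) ^ (-(1 : ℝ) / n) * ε ^ (-(1 : ℝ) / (n * (n - 1))) : ℝ) : ℂ)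
    letI x₁ : ℂ := Complex.exp ((Real.pi : ℂ) * Complex.I / n) * x₀
    letI y₀ : ℂ := (((2 : ℝ) ^ (-(1 : ℝ) / n) * ε ^ ((1 : ℝ) / n) : ℝ) : ℂ)
    letI y₁ : ℂ := -Complex.exp ((Real.pi : ℂ) * Complex.I / n) * y₀
    x₀ ^ (n - k) * y₀ ^ k + x₁ ^ (n - k) * y₁ ^ k
      = if Even k then 0
        else ((ε ^ (((k : ℝ) - 1) / ((n : ℝ) - 1)) : ℝ) : ℂ) := by
  set x₀ : ℂ := (((2 : ℝ) ^ (-(1 : ℝ) / n) * ε ^ (-(1 : ℝ) / (n * (n - 1))) : ℝ) : ℂ) with hx0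
  set y₀ : ℂ := (((2 : ℝ) ^ (-(1 : ℝ) / n) * ε ^ ((1 : ℝ) / n) : ℝ) : ℂ) with hy0
  have hn0 : (n:ℂ) ≠ 0 := by
    simp; omega
  set c : ℂ := Complex.exp ((Real.pi : ℂ) * Complex.I / n) with hc
  have hcn : c ^ n = -1 := by
    rw [hc, ← Complex.exp_nat_mul]
    have : (n:ℂ) * ((Real.pi : ℂ) * Complex.I / n) = (Real.pi : ℂ) * Complex.I := by
      field_simp
    rw [this, Complex.exp_pi_mul_I]
  have hsplit : (c * x₀) ^ (n - k) * (-c * y₀) ^ k = (-1) ^ k * c ^ n * (x₀ ^ (n - k) * y₀ ^ k) := by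
    rw [mul_pow, mul_pow, neg_pow (c : ℂ)]
    rw [show c ^ (n - k) * x₀ ^ (n - k) * ((-1:ℂ) ^ k * c ^ k * y₀ ^ k)
        = (-1:ℂ) ^ k * (c ^ (n - k) * c ^ k) * (x₀ ^ (n - k) * y₀ ^ k) by ring,
      ← pow_add, Nat.sub_add_cancel hk]
  rw [hsplit, hcn]
  rcases Nat.even_or_odd k with he | ho
  · rw [if_pos he, he.neg_one_pow]
    ring
  · rw [if_neg (Nat.not_even_iff_odd.mpr ho), ho.neg_one_pow]
    have := key_real n k hn hk ε hε
    rw [show (-1:ℂ) * -1 * (x₀ ^ (n-k) * y₀ ^ k) = x₀ ^ (n-k) * y₀ ^ k by ring]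
    have hx : x₀ ^ (n - k) * y₀ ^ k + x₀ ^ (n - k) * y₀ ^ k
        = ((2 * ((2:ℝ) ^ (-(1:ℝ)/n) * ε ^ (-(1:ℝ)/((n:ℝ) * ((n:ℝ) - 1)))) ^ (n - k) *
      ((2:ℝ) ^ (-(1:ℝ)/n) * ε ^ ((1:ℝ)/n)) ^ k : ℝ) : ℂ) := by
      rw [hx0, hy0]
      push_cast
      ring
    rw [hx, this]
end

section
/- As ε → 0⁺, ε^{(k−1)/(n−1)} tends to 1 if k = 1 and to 0 if 2 ≤ k ≤ n (for fixed n ≥ 2); consequently the weight-k coefficients of the diagonal MPS family above converge to the coefficients of the (unnormalized) n-qubit W state, which are 1 for k = 1 and 0 for k ≠ 1, as functions on weights 0 ≤ k ≤ n. -/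
open Filter Topology

lemma tendsto_rpow_sub_one_div_sub_one {k n : ℕ} (hk : 1 ≤ k) (hkn : k ≤ n) :
    Tendsto (fun ε : ℝ => ε ^ (((k : ℝ) - 1) / ((n : ℝ) - 1))) (𝓝[>] 0)
      (𝓝 (if k = 1 then 1 else 0)) := by
  rcases hk.eq_or_lt with rfl | hk
  · simp
  · have hexp : 0 < ((k : ℝ) - 1) / ((n : ℝ) - 1) := by
      have hk' : (1 : ℝ) < k := by exact_mod_cast hk
      have hn' : (k : ℝ) ≤ n := by exact_mod_cast hkn
      exact div_pos (by linarith) (by linarith)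
    rw [if_neg hk.ne']
    exact (tendsto_id.mono_left nhdsWithin_le_nhds).rpow_const_nhds_zero hexp

theorem stmt_17_general (n : ℕ) :
    (∀ k : ℕ, 1 ≤ k → k ≤ n →
      Tendsto (fun ε : ℝ => ε ^ (((k : ℝ) - 1) / ((n : ℝ) - 1)))
        (nhdsWithin 0 (Set.Ioi 0))
        (nhds (if k = 1 then (1 : ℝ) else 0)))
    ∧ ∀ k : ℕ, k ≤ n →
      Tendsto (fun ε : ℝ =>
          if Even k then (0 : ℝ) else ε ^ (((k : ℝ) - 1) / ((n : ℝ) - 1)))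
        (nhdsWithin 0 (Set.Ioi 0))
        (nhds (if k = 1 then (1 : ℝ) else 0)) := by
  refine ⟨fun k => tendsto_rpow_sub_one_div_sub_one, fun k hkn => ?_⟩
  by_cases hk : Even k
  · have hk1 : k ≠ 1 := by rintro rfl; exact Nat.not_even_one hk
    simpa only [if_pos hk, if_neg hk1] using tendsto_const_nhds
  · simpa only [if_neg hk] using
      tendsto_rpow_sub_one_div_sub_one (Nat.not_even_iff_odd.mp hk).pos hkn

/-- As `ε → 0⁺`, `ε^{(k−1)/(n−1)}` tends to `1` if `k = 1` and to `0` if `2 ≤ k ≤ n`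
(for fixed `n ≥ 2`); consequently the weight-`k` coefficients of the diagonal MPS family
(`0` for even `k`, `ε^{(k−1)/(n−1)}` for odd `k`) converge, for every weight `0 ≤ k ≤ n`,
to the unnormalized W-state coefficients: `1` for `k = 1` and `0` otherwise. -/
theorem stmt_17 (n : ℕ) (hn : 2 ≤ n) :
    (∀ k : ℕ, 1 ≤ k → k ≤ n →
      Tendsto (fun ε : ℝ => ε ^ (((k : ℝ) - 1) / ((n : ℝ) - 1)))
        (nhdsWithin 0 (Set.Ioi 0))
        (nhds (if k = 1 then (1 : ℝ) else 0)))
    ∧ ∀ k : ℕ, k ≤ n →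
      Tendsto (fun ε : ℝ =>
          if Even k then (0 : ℝ) else ε ^ (((k : ℝ) - 1) / ((n : ℝ) - 1)))
        (nhdsWithin 0 (Set.Ioi 0))
        (nhds (if k = 1 then (1 : ℝ) else 0)) :=
  stmt_17_general n
end
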